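/- Let t ≥ 3 and let a_1 ≤ ... ≤ a_t and b_1 ≤ ... ≤ b_t be integers satisfying a_{i-1} > b_i for 2 ≤ i ≤ t and a_i ≥ b_{i+3} for 1 ≤ i ≤ t-3 (and a_1 ≥ b_t if t = 3). Set s = Σ a_j - Σ b_i. Then b_t - b_1 - a_1 < s - a_t, i.e. a_t - s + b_i - b_k - a_j < 0 for all 1 ≤ i,k ≤ t and 1 ≤ j ≤ t-1. -/

import Mathlib

/-!
Moving `b₁` and `a_t` across, the first claim reads
`b₂ + ⋯ + b_t + b_t < a₁ + ⋯ + a_{t-1} + a₁`, which follows by pairing terms: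
`b_{k+3} ≤ a_k` for `k ≤ t - 3`, `b₂ < a₁`, `b₃ ≤ b_{t-1} < a_{t-2}` and `b_t < a_{t-1}`
(for `t = 3`: `b₂ < a₁`, `b₃ < a₂`, `b₃ ≤ a₁`). The second claim follows from the first
by monotonicity, since `b_i - b_k - a_j ≤ b_t - b₁ - a₁`.
-/

open Finset

theorem sum_tail_add_last_lt_sum_init_add_head {t : ℕ} (ht : 3 ≤ t) {f g : ℕ → ℤ}
    (hg : MonotoneOn g (Set.Iio t))
    (h1 : ∀ j, j + 1 < t → g (j + 1) < f j)
    (h2 : ∀ j, j + 3 < t → g (j + 3) ≤ f j)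
    (h3 : t = 3 → g 2 ≤ f 0) :
    ∑ i ∈ range (t - 1), g (i + 1) + g (t - 1) < ∑ j ∈ range (t - 1), f j + f 0 := by
  obtain ⟨n, rfl⟩ : ∃ n, t = n + 3 := ⟨t - 3, by omega⟩
  rcases n with _ | n
  · simp only [sum_range_succ, sum_range_zero]
    linarith [h1 0 (by omega), h1 1 (by omega), h3 rfl]
  · have hg_split :
        ∑ i ∈ range (n + 3), g (i + 1) = ∑ i ∈ range (n + 1), g (i + 3) + g 2 + g 1 := by
      rw [sum_range_succ' _ (n + 2), sum_range_succ' _ (n + 1)]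
    have hf_split :
        ∑ j ∈ range (n + 3), f j = ∑ j ∈ range (n + 1), f j + f (n + 1) + f (n + 2) := by
      rw [sum_range_succ, sum_range_succ]
    have h_paired : ∑ i ∈ range (n + 1), g (i + 3) ≤ ∑ j ∈ range (n + 1), f j :=
      sum_le_sum fun j hj => h2 j (Nat.add_lt_add_right (mem_range.mp hj) 3)
    have h_mid : g 2 ≤ g (n + 2) := hg (by simp) (by simp) (by omega)
    show ∑ i ∈ range (n + 3), g (i + 1) + g (n + 3) < ∑ j ∈ range (n + 3), f j + f 0
    rw [hg_split, hf_split]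
    linarith [h1 0 (by omega), h1 (n + 1) (by omega), h1 (n + 2) (by omega)]

theorem Fin.exists_extend_nat {α : Type*} [Zero α] {t : ℕ} (a : Fin t → α) :
    ∃ f : ℕ → α, ∀ i, a i = f i :=
  ⟨Function.extend Fin.val a 0, fun i => (Fin.val_injective.extend_apply a 0 i).symm⟩

/-- with `t ≥ 3`, monotone `a`, `b`, `a_{i-1} > b_i` for
`2 ≤ i ≤ t`, `a_i ≥ b_{i+3}` for `1 ≤ i ≤ t-3` (and `a_1 ≥ b_t` if `t = 3`),
and `s = ∑ a - ∑ b`, one has `b_t - b_1 - a_1 < s - a_t`, i.e.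
`a_t - s + b_i - b_k - a_j < 0` for all `i, k` and all `j ≤ t - 1`. -/
theorem stmt4 (t : ℕ) (ht : 3 ≤ t) (a b : Fin t → ℤ)
    (ha : Monotone a) (hb : Monotone b)
    (h1 : ∀ j : Fin t, ∀ h : (j : ℕ) + 1 < t, b ⟨(j : ℕ) + 1, h⟩ < a j)
    (h2 : ∀ i : Fin t, ∀ h : (i : ℕ) + 3 < t, b ⟨(i : ℕ) + 3, h⟩ ≤ a i)
    (h3 : t = 3 → b ⟨t - 1, by omega⟩ ≤ a ⟨0, by omega⟩) :
    (b ⟨t - 1, by omega⟩ - b ⟨0, by omega⟩ - a ⟨0, by omega⟩ <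
        (∑ x, a x - ∑ x, b x) - a ⟨t - 1, by omega⟩) ∧
      (∀ i k : Fin t, ∀ j : Fin t, (j : ℕ) < t - 1 →
        a ⟨t - 1, by omega⟩ - (∑ x, a x - ∑ x, b x) + b i - b k - a j < 0) := by
  obtain ⟨f, hf⟩ := Fin.exists_extend_nat a
  obtain ⟨g, hg⟩ := Fin.exists_extend_nat b
  have hsum : ∑ x, a x - ∑ x, b x =
      (∑ j ∈ range (t - 1), f j + f (t - 1)) - (∑ i ∈ range (t - 1), g (i + 1) + g 0) := by
    have ht1 : t = t - 1 + 1 := by omega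
    rw [← sum_range_succ, ← sum_range_succ', ← ht1, ← Fin.sum_univ_eq_sum_range,
      ← Fin.sum_univ_eq_sum_range]
    simp only [hf, hg]
  have key := sum_tail_add_last_lt_sum_init_add_head ht (f := f) (g := g)
    (fun i hi j hj hij => by
      simpa only [hg, Fin.val_mk] using hb (show (⟨i, hi⟩ : Fin t) ≤ ⟨j, hj⟩ from hij))
    (fun j hj => by simpa only [hf, hg, Fin.val_mk] using h1 ⟨j, by omega⟩ hj)
    (fun j hj => by simpa only [hf, hg, Fin.val_mk] using h2 ⟨j, by omega⟩ hj)
    (fun h => by simpa only [hf, hg, Fin.val_mk, h] using h3 h)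
  have hfirst : b ⟨t - 1, by omega⟩ - b ⟨0, by omega⟩ - a ⟨0, by omega⟩ <
      (∑ x, a x - ∑ x, b x) - a ⟨t - 1, by omega⟩ := by
    rw [hsum]
    simp only [hf, hg]
    linarith
  refine ⟨hfirst, fun i k j _ => ?_⟩
  have hbi : b i ≤ b ⟨t - 1, by omega⟩ :=
    hb (Fin.le_iff_val_le_val.mpr (Nat.le_sub_one_of_lt i.isLt))
  have hbk : b ⟨0, by omega⟩ ≤ b k := hb (Fin.le_iff_val_le_val.mpr (Nat.zero_le _))
  have haj : a ⟨0, by omega⟩ ≤ a j := ha (Fin.le_iff_val_le_val.mpr (Nat.zero_le _))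
  linarith
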